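/- Let L be an even natural number with L ≥ 4. Then the cardinality of the set of sextuples (a,b,c,d,e,f) in S(L,L,L) that additionally satisfy a ≤ b and b ≤ c equals (L/2)(L/2+1)(L/2+2)/6 − ⌊(L/2−1)(L/2+1)(L−3)/24⌋, where the first division is exact and ⌊·⌋ denotes the integer floor of the quotient. -/

import Mathlib

/-!
Write `L = 2 * m`. A sextuple in `S L L L` is determined by its edge counts `(d, e, f)`:
`a ≤ b ≤ c` becomes `d ≥ e ≥ f`, connectivity becomes `e ≥ 1`, and `a, b, c` exist exactly when
`d ≡ e ≡ f (mod 2)` and `d + e ≤ 2 * m`. The triples with `d + e = 2 * j` are parametrised by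
`1 ≤ e ≤ j` and `f ∈ {e, e - 2, …}`, so there are `∑_{e=1}^{j} (⌊e/2⌋ + 1) = j + ⌊j²/4⌋` of them.
The closed form then follows by induction on `m` in steps of two: the numerator
`(m² - 1)(2m - 3)` of the floor grows by exactly `24 · m(m+1)/2` from `m` to `m + 2`.
-/

/-- The set of adjacency data `(a,b,c,d,e,f)` of connected multigraphs on three
nodes with degrees `L1, L2, L3`. -/
def S (L1 L2 L3 : ℕ) : Set (ℕ × ℕ × ℕ × ℕ × ℕ × ℕ) :=
  {(a, b, c, d, e, f) : ℕ × ℕ × ℕ × ℕ × ℕ × ℕ |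
    2 * a + d + e = L1 ∧ 2 * b + d + f = L2 ∧ 2 * c + e + f = L3 ∧
    1 ≤ d + e ∧ 1 ≤ d + f ∧ 1 ≤ e + f}

open Finset

namespace Nat

theorem sum_Icc_div_two_add_one (n : ℕ) : ∑ e ∈ Icc 1 n, (e / 2 + 1) = n + n ^ 2 / 4 := by
  induction n with
  | zero => simp
  | succ n ih =>
    rw [sum_Icc_succ_top (by omega), ih]
    obtain ⟨k, rfl | rfl⟩ := Nat.even_or_odd' n
    · have h1 : (2 * k) ^ 2 = 4 * k ^ 2 := by ring
      have h2 : (2 * k + 1) ^ 2 = 4 * (k ^ 2 + k) + 1 := by ring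
      omega
    · have h1 : (2 * k + 1) ^ 2 = 4 * (k ^ 2 + k) + 1 := by ring
      have h2 : (2 * k + 1 + 1) ^ 2 = 4 * (k ^ 2 + 2 * k + 1) := by ring
      omega

theorem succ_sq_div_four_add_succ_succ_sq_div_four (n : ℕ) :
    (n + 1) ^ 2 / 4 + (n + 2) ^ 2 / 4 = (n + 1) * (n + 2) / 2 := by
  obtain ⟨k, rfl | rfl⟩ := Nat.even_or_odd' n
  · have h1 : (2 * k + 1) ^ 2 = 4 * (k ^ 2 + k) + 1 := by ring
    have h2 : (2 * k + 2) ^ 2 = 4 * (k ^ 2 + 2 * k + 1) := by ring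
    have h3 : (2 * k + 1) * (2 * k + 2) = 2 * (2 * k ^ 2 + 3 * k + 1) := by ring
    omega
  · have h1 : (2 * k + 1 + 1) ^ 2 = 4 * (k ^ 2 + 2 * k + 1) := by ring
    have h2 : (2 * k + 1 + 2) ^ 2 = 4 * (k ^ 2 + 3 * k + 2) + 1 := by ring
    have h3 : (2 * k + 1 + 1) * (2 * k + 1 + 2) = 2 * (2 * k ^ 2 + 5 * k + 3) := by ring
    omega

theorem triangle_add_succ_triangle (n : ℕ) :
    n * (n + 1) / 2 + (n + 1) * (n + 2) / 2 = (n + 1) ^ 2 := by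
  have h1 : (n + 1) * (n + 2) = n * (n + 1) + 2 * (n + 1) := by ring
  have h2 : (n + 1) ^ 2 = n * (n + 1) + (n + 1) := by ring
  have h3 := even_iff.mp (even_mul_succ_self n)
  omega

end Nat

namespace ThreeNodeMultigraph

def tetrahedral (m : ℕ) : ℕ := m * (m + 1) * (m + 2) / 6

def correction (m : ℕ) : ℕ := (m - 1) * (m + 1) * (2 * m - 3) / 24

theorem tetrahedral_add_two (m : ℕ) : tetrahedral (m + 2) = tetrahedral m + (m + 2) ^ 2 := by
  rw [tetrahedral, tetrahedral,
    show (m + 2) * (m + 2 + 1) * (m + 2 + 2) = m * (m + 1) * (m + 2) + 6 * (m + 2) ^ 2 by ring,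
    Nat.add_mul_div_left _ _ (by norm_num)]

theorem correction_add_two (m : ℕ) : correction (m + 2) = correction m + m * (m + 1) / 2 := by
  match m with
  | 0 => rfl
  | 1 => rfl
  | n + 2 =>
    obtain ⟨t, ht⟩ := Nat.even_mul_succ_self (n + 2)
    have hsub : n + 2 - 1 = n + 1 ∧ 2 * (n + 2) - 3 = 2 * n + 1 ∧
        n + 2 + 2 - 1 = n + 3 ∧ 2 * (n + 2 + 2) - 3 = 2 * n + 5 := by omega
    have key : (n + 3) * (n + 2 + 2 + 1) * (2 * n + 5)
        = (n + 1) * (n + 2 + 1) * (2 * n + 1) + 12 * ((n + 2) * (n + 2 + 1)) := by ring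
    rw [correction, correction, hsub.1, hsub.2.1, hsub.2.2.1, hsub.2.2.2, key, ht,
      show 12 * (t + t) = 24 * t by ring, Nat.add_mul_div_left _ _ (by norm_num)]
    omega

/-- For `L = 2 * m`, the edge counts `(d, e, f)` of the sextuples of `S L L L` with
`a ≤ b ≤ c`: since `2a + d + e = 2b + d + f = 2c + e + f`, the order `a ≤ b ≤ c` is `f ≤ e ≤ d`. -/
def sortedEdgeCounts (m : ℕ) : Finset (ℕ × ℕ × ℕ) :=
  (range (2 * m + 1) ×ˢ range (2 * m + 1) ×ˢ range (2 * m + 1)).filter fun (d, e, f) =>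
    f ≤ e ∧ e ≤ d ∧ 1 ≤ e ∧ d + e ≤ 2 * m ∧ Even (d + e) ∧ Even (e + f)

theorem ncard_S_sorted_eq_card_sortedEdgeCounts (m : ℕ) :
    {x ∈ S (2 * m) (2 * m) (2 * m) | x.1 ≤ x.2.1 ∧ x.2.1 ≤ x.2.2.1}.ncard
      = (sortedEdgeCounts m).card := by
  set s := {x ∈ S (2 * m) (2 * m) (2 * m) | x.1 ≤ x.2.1 ∧ x.2.1 ≤ x.2.2.1}
  have hinj : Set.InjOn (fun x => x.2.2.2) s := by
    rintro ⟨a, b, c, d, e, f⟩ ⟨⟨h1, h2, h3, -⟩, -⟩ ⟨a', b', c', d', e', f'⟩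
      ⟨⟨h1', h2', h3', -⟩, -⟩ h
    simp only [Prod.mk.injEq] at h ⊢
    omega
  have himage : (fun x => x.2.2.2) '' s = sortedEdgeCounts m := by
    ext ⟨d, e, f⟩
    simp only [s, S, sortedEdgeCounts, Set.mem_image, Set.mem_ofPred_eq, Prod.exists,
      Prod.mk.injEq, coe_filter, mem_product, mem_range, Nat.even_iff]
    constructor
    · rintro ⟨a, b, c, d, e, f, ⟨⟨h1, h2, h3, h4, h5, h6⟩, h7, h8⟩, rfl, rfl, rfl⟩
      omega
    · rintro ⟨-, h1, h2, h3, h4, h5, h6⟩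
      exact ⟨(2 * m - d - e) / 2, (2 * m - d - f) / 2, (2 * m - e - f) / 2, d, e, f,
        by omega, rfl, rfl, rfl⟩
  rw [← hinj.ncard_image, himage, Set.ncard_coe_finset]

/-- The triples `(d, e, f)` of `sortedEdgeCounts` with `d + e = 2 * j`. -/
def sortedEdgeCountsLevel (j : ℕ) : Finset (ℕ × ℕ × ℕ) :=
  ((Icc 1 j).sigma fun e => range (e / 2 + 1)).image fun p => (2 * j - p.1, p.1, p.1 - 2 * p.2)

theorem card_sortedEdgeCountsLevel (j : ℕ) :
    (sortedEdgeCountsLevel j).card = j + j ^ 2 / 4 := by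
  rw [sortedEdgeCountsLevel, card_image_of_injOn, card_sigma, ← Nat.sum_Icc_div_two_add_one]
  · simp only [card_range]
  rintro ⟨e, k⟩ hek ⟨e', k'⟩ hek' h
  simp only [coe_sigma, Set.mem_sigma_iff, coe_Icc, Set.mem_Icc, coe_range, Set.mem_Iio,
    Prod.mk.injEq] at hek hek' h
  obtain rfl : e = e' := h.2.1
  obtain rfl : k = k' := by omega
  rfl

theorem sortedEdgeCounts_succ (m : ℕ) :
    sortedEdgeCounts (m + 1) = sortedEdgeCounts m ∪ sortedEdgeCountsLevel (m + 1) := by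
  ext ⟨d, e, f⟩
  simp only [sortedEdgeCounts, sortedEdgeCountsLevel, mem_union, mem_filter, mem_product,
    mem_range, mem_image, mem_sigma, mem_Icc, Sigma.exists, Prod.mk.injEq, Nat.even_iff]
  constructor
  · rintro ⟨-, h1, h2, h3, h4, h5, h6⟩
    by_cases h : d + e ≤ 2 * m
    · left; omega
    · right; exact ⟨e, (e - f) / 2, by omega, by omega, rfl, by omega⟩
  · rintro (⟨-, h⟩ | ⟨e', k, ⟨h1, h2⟩, rfl, rfl, rfl⟩) <;> omega

theorem card_sortedEdgeCounts_succ (m : ℕ) :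
    (sortedEdgeCounts (m + 1)).card
      = (sortedEdgeCounts m).card + ((m + 1) + (m + 1) ^ 2 / 4) := by
  rw [sortedEdgeCounts_succ, card_union_of_disjoint, card_sortedEdgeCountsLevel]
  simp only [sortedEdgeCounts, sortedEdgeCountsLevel, disjoint_left, mem_filter, mem_image]
  rintro _ ⟨-, -, -, -, h, -⟩ ⟨⟨e, k⟩, hek, rfl⟩
  simp only [mem_sigma, mem_Icc, mem_range] at hek h
  omega

theorem card_sortedEdgeCounts_add_correction (m : ℕ) :
    (sortedEdgeCounts m).card + correction m = tetrahedral m := by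
  induction m using Nat.twoStepInduction with
  | zero => rfl
  | one => rfl
  | more m ih _ =>
    have hc : (sortedEdgeCounts (m + 2)).card
        = (sortedEdgeCounts m).card + (2 * m + 3) + ((m + 1) ^ 2 / 4 + (m + 2) ^ 2 / 4) := by
      rw [card_sortedEdgeCounts_succ, card_sortedEdgeCounts_succ]
      ring
    rw [hc, Nat.succ_sq_div_four_add_succ_succ_sq_div_four, correction_add_two,
      tetrahedral_add_two, ← ih]
    have h1 := Nat.triangle_add_succ_triangle m
    have h2 : (m + 2) ^ 2 = (m + 1) ^ 2 + 2 * m + 3 := by ring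
    omega

end ThreeNodeMultigraph

theorem count_all_degrees_equal (L : ℕ) (hLe : Even L) :
    ({x ∈ S L L L | x.1 ≤ x.2.1 ∧ x.2.1 ≤ x.2.2.1}.ncard : ℤ) =
      ((L / 2 * (L / 2 + 1) * (L / 2 + 2) / 6 : ℕ) : ℤ)
      - (((L / 2 - 1) * (L / 2 + 1) * (L - 3) / 24 : ℕ) : ℤ) := by
  obtain ⟨m, rfl⟩ := hLe
  rw [← two_mul, Nat.mul_div_cancel_left m two_pos,
    ThreeNodeMultigraph.ncard_S_sorted_eq_card_sortedEdgeCounts]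
  have h := ThreeNodeMultigraph.card_sortedEdgeCounts_add_correction m
  rw [ThreeNodeMultigraph.correction, ThreeNodeMultigraph.tetrahedral] at h
  omega
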